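/- arXiv:2304.11575 — 5 statements merged into one kernel-verified Lean document; each statement's English description precedes it below -/
import Mathlib

section
/- If f : X → Y is injective, then the induced map on choice functions C(f) : CY → CX, sending C to C^f with C^f(K) = f⁻¹[C(f[K])] ∩ K, is surjective. Concretely, given any choice function C over X, the choice function C' over Y defined by C'(K) = f[C(f⁻¹[K])] satisfies (C')^f = C. -/
/-! Since `f` is injective, `f⁻¹[f[K]] = K`, so pulling back the pushforward `K ↦ f[C(f⁻¹[K])]`
returns `C(K) ∩ K = C(K)`; and `f⁻¹[K]` stays finite, so the pushforward is again a choice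
function. -/

namespace ChoiceFunction

variable {X Y : Type*}

def pushforward (f : X → Y) (C : Set X → Set X) : Set Y → Set Y :=
  fun K => f '' C (f ⁻¹' K)

/-- The induced map `C(f)`, sending `C` to `C^f`. -/
def pullback (f : X → Y) (C : Set Y → Set Y) : Set X → Set X :=
  fun K => f ⁻¹' C (f '' K) ∩ K

theorem pushforward_subset {f : X → Y} (hf : Function.Injective f) {C : Set X → Set X}
    (hC : ∀ K : Set X, K.Finite → C K ⊆ K) {K : Set Y} (hK : K.Finite) :
    pushforward f C K ⊆ K :=
  Set.image_subset_iff.2 (hC _ (hK.preimage hf.injOn))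

theorem pullback_pushforward_apply {f : X → Y} (hf : Function.Injective f) {C : Set X → Set X}
    {K : Set X} (hCK : C K ⊆ K) :
    pullback f (pushforward f C) K = C K := by
  simp only [pullback, pushforward, Set.preimage_image_eq _ hf, Set.inter_eq_left.2 hCK]

end ChoiceFunction

/-- If `f : X → Y` is injective, then the induced map on
choice functions `C ↦ C^f` is surjective: for any choice function `C`
over `X`, the choice function `C'` over `Y` with `C' K = f[C(f⁻¹[K])]`
satisfies `(C')^f = C`. -/
theorem choice_pullback_surjective_of_injective {X Y : Type*} (f : X → Y)
    (hf : Function.Injective f)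
    (C : Set X → Set X) (hC : ∀ K : Set X, K.Finite → C K ⊆ K) :
    ∃ C' : Set Y → Set Y,
      (∀ K : Set Y, K.Finite → C' K ⊆ K) ∧
      (∀ K : Set Y, C' K = f '' (C (f ⁻¹' K))) ∧
      (∀ K : Set X, K.Finite → f ⁻¹' (C' (f '' K)) ∩ K = C K) :=
  ⟨ChoiceFunction.pushforward f C,
    fun _ hK => ChoiceFunction.pushforward_subset hf hC hK,
    fun _ => rfl,
    fun K hK => ChoiceFunction.pullback_pushforward_apply hf (hC K hK)⟩
end

section
/- If f : X → Y is surjective, then the induced map on choice functions C(f) : CY → CX, sending C to C^f with C^f(K) = f⁻¹[C(f[K])] ∩ K for finite K ⊆ X, is injective. -/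
/-- If `f : X → Y` is surjective, then the induced map on
choice functions `C ↦ C^f` (with `C^f K = f⁻¹[C(f[K])] ∩ K`) is
injective. -/
theorem choice_pullback_injective_of_surjective {X Y : Type*} (f : X → Y)
    (hf : Function.Surjective f)
    (C C' : Set Y → Set Y)
    (hC : ∀ K : Set Y, K.Finite → C K ⊆ K)
    (hC' : ∀ K : Set Y, K.Finite → C' K ⊆ K)
    (h : ∀ K : Set X, K.Finite →
      f ⁻¹' (C (f '' K)) ∩ K = f ⁻¹' (C' (f '' K)) ∩ K) :
    ∀ K : Set Y, K.Finite → C K = C' K := by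
  obtain ⟨g, hg⟩ := hf.hasRightInverse
  intro K hK
  have himg : f '' (g '' K) = K := by
    ext y
    constructor
    · rintro ⟨x, ⟨z, hz, rfl⟩, rfl⟩
      rwa [hg z]
    · intro hy
      exact ⟨g y, ⟨y, hy, rfl⟩, hg y⟩
  have h' := h (g '' K) (hK.image g)
  rw [himg] at h'
  ext y
  constructor
  · intro hy
    have hyK := hC K hK hy
    have : g y ∈ f ⁻¹' (C K) ∩ g '' K := ⟨by simp [Set.mem_preimage, hg y, hy], ⟨y, hyK, rfl⟩⟩
    rw [h'] at this
    have := this.1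
    rwa [Set.mem_preimage, hg y] at this
  · intro hy
    have hyK := hC' K hK hy
    have : g y ∈ f ⁻¹' (C' K) ∩ g '' K := ⟨by simp [Set.mem_preimage, hg y, hy], ⟨y, hyK, rfl⟩⟩
    rw [← h'] at this
    have := this.1
    rwa [Set.mem_preimage, hg y] at this
end

section
/- Maximization is natural: for every function f : X → Y and every partial order ≼ on Y, the choice function obtained by first pulling back ≼ along f and then maximizing equals the one obtained by first maximizing ≼ and then pulling back the resulting choice function along f. Explicitly, for all finite K ⊆ X: m_X(≼^f)(K) = f⁻¹[m_Y(≼)(f[K])] ∩ K, where x ≼^f x' iff f(x) ≼ f(x'). -/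
/-- The set of maximal elements of `K` with respect to the relation `r`,
where `x ≺ y` means `r x y ∧ ¬ r y x`. -/
def maxSet {X : Type*} (r : X → X → Prop) (K : Set X) : Set X :=
  {m | m ∈ K ∧ ¬ ∃ k ∈ K, r m k ∧ ¬ r k m}

/-- Naturality of maximization: for `f : X → Y`, a partial
order `≼` on `Y` and finite `K ⊆ X`,
`m_X(≼^f)(K) = f⁻¹[m_Y(≼)(f[K])] ∩ K`, where `x ≼^f x' ↔ f x ≼ f x'`. -/
theorem maximization_natural {X Y : Type*} (f : X → Y) (r : Y → Y → Prop)
    (hr_refl : ∀ y, r y y)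
    (hr_trans : ∀ x y z, r x y → r y z → r x z)
    (hr_antisymm : ∀ x y, r x y → r y x → x = y)
    (K : Set X) (hK : K.Finite) :
    maxSet (fun x x' => r (f x) (f x')) K
      = f ⁻¹' (maxSet r (f '' K)) ∩ K := by
  ext x
  simp only [maxSet, Set.mem_setOf_eq, Set.mem_inter_iff, Set.mem_preimage,
    Set.mem_image]
  constructor
  · rintro ⟨hx, h⟩
    refine ⟨⟨⟨x, hx, rfl⟩, ?_⟩, hx⟩
    rintro ⟨y, ⟨k, hk, rfl⟩, h1, h2⟩
    exact h ⟨k, hk, h1, h2⟩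
  · rintro ⟨⟨-, h⟩, hx⟩
    refine ⟨hx, ?_⟩
    rintro ⟨k, hk, h1, h2⟩
    exact h ⟨f k, ⟨k, hk, rfl⟩, h1, h2⟩
end

section
/- The set of maximal elements of a finite set K in a partial order ≼ is contained in L if and only if for every k ∈ K \ L there exists l ∈ L with k ≼ l and not l ≼ k. Consequently, the preimage under maximization of the basic event B^K_L = {C : C(K) ⊆ L} equals the finite Boolean combination ⋂_{k ∈ K\L} ⋃_{l ∈ L} (B_{k≼l} \ B_{l≼k}) of basic events of the space of partial orders, where B_{x≼y} = {≼ : x ≼ y}. -/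
/-- `r` is a partial order: reflexive, transitive and antisymmetric. -/
def IsPartialOrderRel {X : Type*} (r : X → X → Prop) : Prop :=
  (∀ x, r x x) ∧ (∀ x y z, r x y → r y z → r x z) ∧
    (∀ x y, r x y → r y x → x = y)

lemma exists_max_above {X : Type*} (r : X → X → Prop) (hr : IsPartialOrderRel r)
    (K : Set X) (hK : K.Finite) :
    ∀ k ∈ K, ∃ m ∈ maxSet r K, r k m := by
  obtain ⟨hrefl, htrans, hanti⟩ := hr
  have hD : ∀ k : X, {x ∈ K | r k x ∧ ¬ r x k}.Finite := fun k =>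
    hK.subset (fun x hx => hx.1)
  suffices h : ∀ n : ℕ, ∀ k ∈ K, (hD k).toFinset.card ≤ n → ∃ m ∈ maxSet r K, r k m by
    intro k hk
    exact h (hD k).toFinset.card k hk le_rfl
  intro n
  induction n with
  | zero =>
    intro k hk hcard
    refine ⟨k, ⟨hk, ?_⟩, hrefl k⟩
    rintro ⟨j, hj, hkj, hjk⟩
    have : j ∈ (hD k).toFinset := by simp only [Set.Finite.mem_toFinset, Set.mem_setOf_eq]; exact ⟨hj, hkj, hjk⟩
    have := Finset.card_pos.mpr ⟨j, this⟩
    omega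
  | succ n ih =>
    intro k hk hcard
    by_cases hmax : ∃ j ∈ K, r k j ∧ ¬ r j k
    · obtain ⟨k', hk', hkk', hk'k⟩ := hmax
      have hsub : (hD k').toFinset ⊆ (hD k).toFinset := by
        intro x hx
        simp only [Set.Finite.mem_toFinset, Set.mem_setOf_eq] at hx ⊢
        obtain ⟨hxK, hk'x, hxk'⟩ := hx
        exact ⟨hxK, htrans _ _ _ hkk' hk'x, fun hxk => hxk' (htrans _ _ _ hxk hkk')⟩
      have hmem : k' ∈ (hD k).toFinset := by
        simp only [Set.Finite.mem_toFinset, Set.mem_setOf_eq]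
        exact ⟨hk', hkk', hk'k⟩
      have hnmem : k' ∉ (hD k').toFinset := by
        simp only [Set.Finite.mem_toFinset, Set.mem_setOf_eq]
        intro ⟨_, _, h⟩; exact h (hrefl k')
      have hlt : (hD k').toFinset.card < (hD k).toFinset.card :=
        Finset.card_lt_card (Finset.ssubset_iff_of_subset hsub |>.mpr ⟨k', hmem, hnmem⟩)
      obtain ⟨m, hm, hk'm⟩ := ih k' hk' (by omega)
      exact ⟨m, hm, htrans _ _ _ hkk' hk'm⟩
    · exact ⟨k, ⟨hk, hmax⟩, hrefl k⟩

lemma key {X : Type*} (K L : Set X) (hK : K.Finite) (hLK : L ⊆ K)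
    (r : X → X → Prop) (hr : IsPartialOrderRel r) :
    maxSet r K ⊆ L ↔ ∀ k ∈ K \ L, ∃ l ∈ L, r k l ∧ ¬ r l k := by
  obtain ⟨hrefl, htrans, hanti⟩ := hr
  constructor
  · intro h k hk
    obtain ⟨m, hm, hkm⟩ := exists_max_above r ⟨hrefl, htrans, hanti⟩ K hK k hk.1
    refine ⟨m, h hm, hkm, fun hmk => ?_⟩
    exact hk.2 (hanti _ _ hkm hmk ▸ h hm)
  · intro h m hm
    by_contra hmL
    obtain ⟨l, hl, hml, hlm⟩ := h m ⟨hm.1, hmL⟩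
    exact hm.2 ⟨l, hLK hl, hml, hlm⟩

/-- For a finite `K` and `L ⊆ K`, the maximal elements of
`K` in a partial order `≼` are contained in `L` iff every `k ∈ K \ L` is
strictly dominated by some `l ∈ L`; consequently the preimage of the
basic event `B^K_L` under maximization is the displayed finite Boolean
combination of basic events of the space of partial orders. -/
theorem maximization_preimage_basic_event {X : Type*} (K L : Set X)
    (hK : K.Finite) (hLK : L ⊆ K) :
    (∀ r : X → X → Prop, IsPartialOrderRel r →
      (maxSet r K ⊆ L ↔ ∀ k ∈ K \ L, ∃ l ∈ L, r k l ∧ ¬ r l k)) ∧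
    {p : {r : X → X → Prop // IsPartialOrderRel r} | maxSet p.1 K ⊆ L}
      = ⋂ k ∈ K \ L, ⋃ l ∈ L,
          ({p : {r : X → X → Prop // IsPartialOrderRel r} | p.1 k l}
            \ {p : {r : X → X → Prop // IsPartialOrderRel r} | p.1 l k}) := by
  refine ⟨fun r hr => key K L hK hLK r hr, ?_⟩
  ext p
  simp only [Set.mem_setOf_eq, Set.mem_iInter, Set.mem_iUnion, Set.mem_diff]
  rw [key K L hK hLK p.1 p.2]
  constructor
  · intro h k hk
    obtain ⟨l, hl, h1, h2⟩ := h k hk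
    exact ⟨l, hl, h1, h2⟩
  · intro h k hk
    obtain ⟨l, hl, h1, h2⟩ := h k hk
    exact ⟨l, hl, h1, h2⟩
end

section
/- For a function f : X → Y and finite sets L ⊆ K ⊆ X, the preimage under the induced map on choice functions of the basic event B^K_L = {C over X : C(K) ⊆ L} equals the basic event B^{f[K]}_{L̂} = {C over Y : C(f[K]) ⊆ L̂}, where L̂ = {y ∈ f[K] : f⁻¹[{y}] ∩ K ⊆ L}. That is, for every choice function C over Y: f⁻¹[C(f[K])] ∩ K ⊆ L if and only if C(f[K]) ⊆ L̂. -/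
/-- For `f : X → Y` and finite `L ⊆ K ⊆ X`, the preimage of
the basic event `B^K_L` under the induced map on choice functions is the
basic event `B^{f[K]}_{L̂}` with `L̂ = {y ∈ f[K] : f⁻¹{y} ∩ K ⊆ L}`:
for every choice function `C` over `Y`,
`f⁻¹[C(f[K])] ∩ K ⊆ L ↔ C(f[K]) ⊆ L̂`. -/
theorem choice_pullback_basic_event {X Y : Type*} (f : X → Y)
    (K L : Set X) (hK : K.Finite) (hLK : L ⊆ K)
    (C : Set Y → Set Y) (hC : ∀ K' : Set Y, K'.Finite → C K' ⊆ K') :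
    (f ⁻¹' (C (f '' K)) ∩ K ⊆ L)
      ↔ C (f '' K) ⊆ {y ∈ f '' K | f ⁻¹' {y} ∩ K ⊆ L} := by
  constructor
  · intro h y hy
    refine ⟨hC _ (hK.image f) hy, ?_⟩
    intro x ⟨hx1, hx2⟩
    exact h ⟨by rw [Set.mem_preimage, hx1]; exact hy, hx2⟩
  · intro h x ⟨hx1, hx2⟩
    exact (h hx1).2 ⟨rfl, hx2⟩
end
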